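/- arXiv:1604.00124 — 2 statements merged into one kernel-verified Lean document; each statement's English description precedes it below -/
import Mathlib

section
/- Fix real parameters r, s, c₃ and c ≥ 0 with |s| < 1, such that H₊(z) ≤ 1+sz and H₋(z) ≤ 1−sz for all z ∈ [0,1]. If s ≤ 0, r·c₃ ≥ 0, and c₃² − c² ≥ s·r·c₃, then F(z) ≤ F(1) for all z ∈ [0,1], and F(1) = (1/4)(1+s+r+c₃)log₂((1+s+r+c₃)/(1+s)) + (1/4)(1+s−r−c₃)log₂((1+s−r−c₃)/(1+s)) + (1/4)(1−s+r−c₃)log₂((1−s+r−c₃)/(1−s)) + (1/4)(1−s−r+c₃)log₂((1−s−r+c₃)/(1−s)). -/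
/-- `H₊(z) = √(c²(1−z²)+(r+c₃z)²)`. -/
noncomputable def Hp (r c₃ c z : ℝ) : ℝ := Real.sqrt (c^2*(1 - z^2) + (r + c₃*z)^2)

/-- `H₋(z) = √(c²(1−z²)+(r−c₃z)²)`. -/
noncomputable def Hm (r c₃ c z : ℝ) : ℝ := Real.sqrt (c^2*(1 - z^2) + (r - c₃*z)^2)

/-- The one-variable function `F(z)` from the quantum discord of X-states. -/
noncomputable def F (r s c₃ c z : ℝ) : ℝ :=
  (1/4) * (1 + s*z + Hp r c₃ c z) * Real.logb 2 ((1 + s*z + Hp r c₃ c z) / (1 + s*z)) +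
  (1/4) * (1 + s*z - Hp r c₃ c z) * Real.logb 2 ((1 + s*z - Hp r c₃ c z) / (1 + s*z)) +
  (1/4) * (1 - s*z + Hm r c₃ c z) * Real.logb 2 ((1 - s*z + Hm r c₃ c z) / (1 - s*z)) +
  (1/4) * (1 - s*z - Hm r c₃ c z) * Real.logb 2 ((1 - s*z - Hm r c₃ c z) / (1 - s*z))

/-!
Write `a = 1 + sz`, `b = 1 - sz`, `u = H₊/a`, `v = H₋/b`, `p = r c₃`, `q = c₃² - c²` and
`ℓ(t) = log ((1 + t)/(1 - t)) / t`, which is increasing on `(0, 1)` by its power series. Then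
`4 log 2 · F' = s log (1 - u²) - s log (1 - v²) + (p + qz)/a · ℓ(u) + (qz - p)/b · ℓ(v)`.
Since `H₋² = H₊² - 4pz` and `a ≤ b`, we have `v ≤ u`, so the logarithmic terms are nonnegative
for `s ≤ 0`; and `q ≥ sp` gives `(p + qz)/a ≥ p` and `(qz - p)/b ≥ -p`, so the remaining terms
are at least `p (ℓ(u) - ℓ(v)) ≥ 0`. The formula for `F'` holds off the zeros of the quadratics
`H₋²`, `H₊² - a²`, `H₋² - b²`, which are finite unless one of them vanishes identically, and in
that case `F` is constant.
-/

open Real Set Filter Topology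

theorem le_of_deriv_nonneg_off_finite {f : ℝ → ℝ} {s : Set ℝ} (hs : s.Finite) {a b : ℝ}
    (hab : a ≤ b) (hf : ContinuousOn f (Icc a b))
    (hd : ∀ x ∈ Ioo a b \ s, DifferentiableAt ℝ f x) (hd' : ∀ x ∈ Ioo a b \ s, 0 ≤ deriv f x) :
    f a ≤ f b := by
  induction s, hs using Set.Finite.induction_on generalizing a b with
  | empty =>
    simp only [sdiff_empty] at hd hd'
    refine monotoneOn_of_deriv_nonneg (convex_Icc a b) hf ?_ ?_
      (left_mem_Icc.2 hab) (right_mem_Icc.2 hab) hab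
    · rw [interior_Icc]; exact fun x hx => (hd x hx).differentiableWithinAt
    · rwa [interior_Icc]
  | @insert e s _ _ ih =>
    by_cases he : e ∈ Ioo a b
    · have sub₁ : Ioo a e \ s ⊆ Ioo a b \ insert e s := fun x ⟨hx, hxs⟩ =>
        ⟨⟨hx.1, hx.2.trans he.2⟩, by rintro (rfl | h); exacts [hx.2.false, hxs h]⟩
      have sub₂ : Ioo e b \ s ⊆ Ioo a b \ insert e s := fun x ⟨hx, hxs⟩ =>
        ⟨⟨he.1.trans hx.1, hx.2⟩, by rintro (rfl | h); exacts [hx.1.false, hxs h]⟩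
      exact (ih he.1.le (hf.mono (Icc_subset_Icc_right he.2.le))
          (fun x hx => hd x (sub₁ hx)) (fun x hx => hd' x (sub₁ hx))).trans
        (ih he.2.le (hf.mono (Icc_subset_Icc_left he.1.le))
          (fun x hx => hd x (sub₂ hx)) (fun x hx => hd' x (sub₂ hx)))
    · have sub : Ioo a b \ s ⊆ Ioo a b \ insert e s := fun x ⟨hx, hxs⟩ =>
        ⟨hx, by rintro (rfl | h); exacts [he hx, hxs h]⟩
      exact ih hab hf (fun x hx => hd x (sub hx)) (fun x hx => hd' x (sub hx))

theorem finite_setOf_quadratic_eq_zero {α β γ : ℝ} (h : ¬(α = 0 ∧ β = 0 ∧ γ = 0)) :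
    {x : ℝ | α * x ^ 2 + β * x + γ = 0}.Finite := by
  open Polynomial in
  have hp : C α * X ^ 2 + C β * X + C γ ≠ 0 := by
    contrapose! h
    refine ⟨?_, ?_, ?_⟩
    · simpa using congrArg (coeff · 2) h
    · simpa using congrArg (coeff · 1) h
    · simpa using congrArg (coeff · 0) h
  exact (Polynomial.finite_setOfPred_isRoot hp).subset fun x hx => by simpa using hx

theorem log_one_add_sub_log_one_sub_div_le {u v : ℝ} (hv : 0 < v) (hvu : v ≤ u) (hu : u < 1) :
    (log (1 + v) - log (1 - v)) / v ≤ (log (1 + u) - log (1 - u)) / u := by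
  have series {x : ℝ} (hx0 : 0 < x) (hx1 : x < 1) :
      HasSum (fun k : ℕ => 2 * (1 / (2 * k + 1)) * x ^ (2 * k))
        ((log (1 + x) - log (1 - x)) / x) := by
    have e : (fun k : ℕ => 2 * (1 / (2 * k + 1)) * x ^ (2 * k)) =
        fun k : ℕ => 2 * (1 / (2 * k + 1)) * x ^ (2 * k + 1) / x := by
      ext k
      rw [pow_succ, ← mul_assoc, mul_div_cancel_right₀ _ hx0.ne']
    rw [e]
    exact (hasSum_log_sub_log_of_abs_lt_one (abs_lt.2 ⟨by linarith, hx1⟩)).div_const x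
  refine hasSum_le (fun k => ?_) (series hv (hvu.trans_lt hu)) (series (hv.trans_le hvu) hu)
  gcongr

/-- The relative entropy of the weights `(a + h, a - h)` with respect to `(a, a)`. -/
noncomputable def pairDivergence (a h : ℝ) : ℝ :=
  (a + h) * log ((a + h) / a) + (a - h) * log ((a - h) / a)

theorem pairDivergence_eq {a : ℝ} (ha : a ≠ 0) (h : ℝ) :
    pairDivergence a h = (a + h) * log (a + h) + (a - h) * log (a - h) - 2 * (a * log a) := by
  have mul_log_div (x : ℝ) : x * log (x / a) = x * log x - x * log a := by
    rcases eq_or_ne x 0 with rfl | hx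
    · simp
    · rw [log_div hx ha, mul_sub]
  rw [pairDivergence, mul_log_div, mul_log_div]
  ring

theorem pairDivergence_zero_right (a : ℝ) : pairDivergence a 0 = 0 := by
  rcases eq_or_ne a 0 with rfl | ha
  · simp [pairDivergence]
  · simp [pairDivergence, div_self ha]

theorem pairDivergence_abs (a h : ℝ) : pairDivergence a |h| = pairDivergence a h := by
  rcases abs_cases h with ⟨e, -⟩ | ⟨e, -⟩ <;> simp only [e, pairDivergence]
  ring_nf

theorem continuousOn_pairDivergence {A H : ℝ → ℝ} {S : Set ℝ} (hA : ContinuousOn A S)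
    (hH : ContinuousOn H S) (hA0 : ∀ z ∈ S, A z ≠ 0) :
    ContinuousOn (fun z => pairDivergence (A z) (H z)) S := by
  refine ContinuousOn.congr ?_ fun z hz => pairDivergence_eq (hA0 z hz) (H z)
  have hφ := continuous_mul_log
  exact ((hφ.comp_continuousOn (hA.add hH)).add (hφ.comp_continuousOn (hA.sub hH))).sub
    ((hφ.comp_continuousOn hA).const_smul (2 : ℝ))

theorem hasDerivAt_pairDivergence {A H : ℝ → ℝ} {A' H' z : ℝ} (hA : HasDerivAt A A' z)
    (hH : HasDerivAt H H' z) (hlt : |H z| < A z) :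
    HasDerivAt (fun z => pairDivergence (A z) (H z))
      (A' * log (1 - (H z / A z) ^ 2) +
        H' * (log (1 + H z / A z) - log (1 - H z / A z))) z := by
  have hA0 : 0 < A z := (abs_nonneg _).trans_lt hlt
  obtain ⟨hlo, hhi⟩ := abs_lt.1 hlt
  have hd := (((hasDerivAt_mul_log (by linarith : A z + H z ≠ 0)).comp z (hA.add hH)).add
    ((hasDerivAt_mul_log (by linarith : A z - H z ≠ 0)).comp z (hA.sub hH))).sub
    (((hasDerivAt_mul_log hA0.ne').comp z hA).const_mul 2)
  have heq : (fun z => pairDivergence (A z) (H z)) =ᶠ[𝓝 z]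
      fun z => (A z + H z) * log (A z + H z) + (A z - H z) * log (A z - H z) -
        2 * (A z * log (A z)) := by
    filter_upwards [hA.continuousAt.eventually_ne hA0.ne'] with y hy
    exact pairDivergence_eq hy (H y)
  refine (hd.congr_of_eventuallyEq heq).congr_deriv ?_
  set u := H z / A z
  have hu : |u| < 1 := by rwa [abs_div, abs_of_pos hA0, div_lt_one hA0]
  have hup : 0 < 1 + u := by linarith [(abs_lt.1 hu).1]
  have hum : 0 < 1 - u := by linarith [(abs_lt.1 hu).2]
  have ep : log (A z + H z) = log (A z) + log (1 + u) := by
    rw [← log_mul hA0.ne' hup.ne', mul_add, mul_one, mul_div_cancel₀ _ hA0.ne']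
  have em : log (A z - H z) = log (A z) + log (1 - u) := by
    rw [← log_mul hA0.ne' hum.ne', mul_sub, mul_one, mul_div_cancel₀ _ hA0.ne']
  have e₂ : log (1 - u ^ 2) = log (1 + u) + log (1 - u) := by
    rw [← log_mul hup.ne' hum.ne']; ring_nf
  simp only [ep, em, e₂]
  ring

theorem F_eq_pairDivergence (r s c₃ c z : ℝ) :
    F r s c₃ c z = (pairDivergence (1 + s * z) (Hp r c₃ c z) +
      pairDivergence (1 - s * z) (Hm r c₃ c z)) / (4 * log 2) := by
  simp only [F, pairDivergence, logb]
  ring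

theorem Hm_eq_Hp_neg (r c₃ c : ℝ) : Hm r c₃ c = Hp r (-c₃) c := by
  funext z
  simp only [Hm, Hp]
  ring_nf

theorem continuous_Hp (r c₃ c : ℝ) : Continuous (Hp r c₃ c) := by
  unfold Hp
  fun_prop

theorem hasDerivAt_Hp {r c₃ c z : ℝ} (hpos : 0 < Hp r c₃ c z) :
    HasDerivAt (Hp r c₃ c) ((r * c₃ + (c₃ ^ 2 - c ^ 2) * z) / Hp r c₃ c z) z := by
  have hP : HasDerivAt (fun z => c ^ 2 * (1 - z ^ 2) + (r + c₃ * z) ^ 2)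
      (2 * (r * c₃ + (c₃ ^ 2 - c ^ 2) * z)) z := by
    refine ((((hasDerivAt_pow 2 z).const_sub 1).const_mul (c ^ 2)).add
      ((((hasDerivAt_id' z).const_mul c₃).const_add r).pow 2)).congr_deriv ?_
    simp only [Nat.cast_ofNat]
    ring
  exact (hP.sqrt (Real.sqrt_pos.1 hpos).ne').congr_deriv (mul_div_mul_left _ _ two_ne_zero)

theorem deriv_F_numerator_nonneg {s z p q h k : ℝ} (hs : s ≤ 0) (hz : 0 ≤ z) (hp : 0 ≤ p)
    (hq : s * p ≤ q) (hk : 0 < k) (hkh : k ≤ h) (hha : h < 1 + s * z) (hkb : k < 1 - s * z) :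
    0 ≤ s * log (1 - (h / (1 + s * z)) ^ 2) +
      (p + q * z) / h * (log (1 + h / (1 + s * z)) - log (1 - h / (1 + s * z))) +
      -s * log (1 - (k / (1 - s * z)) ^ 2) +
      (q * z - p) / k * (log (1 + k / (1 - s * z)) - log (1 - k / (1 - s * z))) := by
  set a := 1 + s * z with ha_def
  set b := 1 - s * z with hb_def
  have hh : 0 < h := hk.trans_le hkh
  have ha : 0 < a := hh.trans hha
  have hb : 0 < b := hk.trans hkb
  have hab : a ≤ b := by nlinarith
  set u := h / a with hu_def
  set v := k / b with hv_def
  have hv : 0 < v := div_pos hk hb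
  have hvu : v ≤ u := div_le_div₀ hh.le hkh ha hab
  have hu : u < 1 := (div_lt_one ha).2 hha
  have hℓ := log_one_add_sub_log_one_sub_div_le hv hvu hu
  have hℓv : 0 ≤ (log (1 + v) - log (1 - v)) / v :=
    div_nonneg (sub_nonneg.2 (log_le_log (by linarith) (by linarith))) hv.le
  have hlog : log (1 - u ^ 2) ≤ log (1 - v ^ 2) := log_le_log (by nlinarith) (by nlinarith)
  set Lu := log (1 + u) - log (1 - u)
  set Lv := log (1 + v) - log (1 - v)
  clear_value Lu Lv
  have e₁ : (p + q * z) / h * Lu = (p + (q - s * p) * z / a) * (Lu / u) := by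
    rw [hu_def]; field_simp; rw [ha_def]; ring
  have e₂ : (q * z - p) / k * Lv = (-p + (q - s * p) * z / b) * (Lv / v) := by
    rw [hv_def]; field_simp; rw [hb_def]; ring
  rw [e₁, e₂]
  have t₁ : 0 ≤ s * (log (1 - u ^ 2) - log (1 - v ^ 2)) :=
    mul_nonneg_of_nonpos_of_nonpos hs (by linarith)
  have t₂ : 0 ≤ p * (Lu / u - Lv / v) := mul_nonneg hp (by linarith)
  have t₃ : 0 ≤ (q - s * p) * z * (Lu / u / a + Lv / v / b) :=
    mul_nonneg (mul_nonneg (by linarith) hz)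
      (add_nonneg (div_nonneg (hℓv.trans hℓ) ha.le) (div_nonneg hℓv hb.le))
  linear_combination t₁ + t₂ + t₃

theorem hasDerivAt_F {r s c₃ c z : ℝ} (hh : 0 < Hp r c₃ c z) (hk : 0 < Hm r c₃ c z)
    (hha : Hp r c₃ c z < 1 + s * z) (hkb : Hm r c₃ c z < 1 - s * z) :
    HasDerivAt (F r s c₃ c)
      ((s * log (1 - (Hp r c₃ c z / (1 + s * z)) ^ 2) +
        (r * c₃ + (c₃ ^ 2 - c ^ 2) * z) / Hp r c₃ c z *
          (log (1 + Hp r c₃ c z / (1 + s * z)) - log (1 - Hp r c₃ c z / (1 + s * z))) +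
        -s * log (1 - (Hm r c₃ c z / (1 - s * z)) ^ 2) +
        ((c₃ ^ 2 - c ^ 2) * z - r * c₃) / Hm r c₃ c z *
          (log (1 + Hm r c₃ c z / (1 - s * z)) - log (1 - Hm r c₃ c z / (1 - s * z)))) /
        (4 * log 2)) z := by
  have hA : HasDerivAt (fun z => 1 + s * z) s z := by
    simpa using ((hasDerivAt_id z).const_mul s).const_add 1
  have hB : HasDerivAt (fun z => 1 - s * z) (-s) z := by
    simpa using ((hasDerivAt_id z).const_mul s).const_sub 1
  have hHm := hasDerivAt_Hp (r := r) (c₃ := -c₃) (c := c) (z := z) (by rwa [← Hm_eq_Hp_neg])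
  rw [← Hm_eq_Hp_neg] at hHm
  have hd := ((hasDerivAt_pairDivergence hA (hasDerivAt_Hp hh)
    (by rwa [abs_of_pos hh])).add (hasDerivAt_pairDivergence hB hHm
    (by rwa [abs_of_pos hk]))).div_const (4 * log 2)
  rw [funext (F_eq_pairDivergence r s c₃ c)]
  exact hd.congr_deriv (by ring)

theorem continuousOn_F {r s c₃ c : ℝ} (hs : |s| < 1) : ContinuousOn (F r s c₃ c) (Icc 0 1) := by
  have hsz {z : ℝ} (hz : z ∈ Icc (0 : ℝ) 1) : |s * z| < 1 := by
    rw [abs_mul, abs_of_nonneg hz.1]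
    exact (mul_le_of_le_one_right (abs_nonneg s) hz.2).trans_lt hs
  rw [funext (F_eq_pairDivergence r s c₃ c)]
  refine ((continuousOn_pairDivergence (by fun_prop) (continuous_Hp r c₃ c).continuousOn
    fun z hz => ?_).add (continuousOn_pairDivergence (by fun_prop)
    (Hm_eq_Hp_neg r c₃ c ▸ continuous_Hp r (-c₃) c).continuousOn fun z hz => ?_)).div_const _
  · linarith [(abs_lt.1 (hsz hz)).1]
  · linarith [(abs_lt.1 (hsz hz)).2]

theorem F_one (r s c₃ c : ℝ) :
    F r s c₃ c 1 =
      (1/4) * (1 + s + r + c₃) * Real.logb 2 ((1 + s + r + c₃) / (1 + s)) +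
      (1/4) * (1 + s - r - c₃) * Real.logb 2 ((1 + s - r - c₃) / (1 + s)) +
      (1/4) * (1 - s + r - c₃) * Real.logb 2 ((1 - s + r - c₃) / (1 - s)) +
      (1/4) * (1 - s - r + c₃) * Real.logb 2 ((1 - s - r + c₃) / (1 - s)) := by
  have hp : Hp r c₃ c 1 = |r + c₃| := by norm_num [Hp, sqrt_sq_eq_abs]
  have hm : Hm r c₃ c 1 = |r - c₃| := by norm_num [Hm, sqrt_sq_eq_abs]
  rw [F_eq_pairDivergence, hp, hm, pairDivergence_abs, pairDivergence_abs]
  simp only [pairDivergence, logb, mul_one]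
  ring_nf

theorem F_zero (s z : ℝ) : F 0 s 0 0 z = 0 := by
  simp [F_eq_pairDivergence, Hp, Hm, pairDivergence_zero_right]

theorem F_eq_one {r c₃ c : ℝ} (hrc₃ : r * c₃ = 0) (hc₃ : c₃ ^ 2 = c ^ 2) (hcr : c ^ 2 + r ^ 2 = 1)
    (z : ℝ) : F r 0 c₃ c z = 1 := by
  have hp : Hp r c₃ c z = 1 := by
    rw [Hp, show c ^ 2 * (1 - z ^ 2) + (r + c₃ * z) ^ 2 = 1 by
      linear_combination hcr + z ^ 2 * hc₃ + 2 * z * hrc₃, sqrt_one]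
  have hm : Hm r c₃ c z = 1 := by
    rw [Hm, show c ^ 2 * (1 - z ^ 2) + (r - c₃ * z) ^ 2 = 1 by
      linear_combination hcr + z ^ 2 * hc₃ - 2 * z * hrc₃, sqrt_one]
  norm_num [F, hp, hm]

def boundaryPoints (r s c₃ c : ℝ) : Set ℝ :=
  {z | c ^ 2 * (1 - z ^ 2) + (r - c₃ * z) ^ 2 = 0} ∪
    {z | c ^ 2 * (1 - z ^ 2) + (r + c₃ * z) ^ 2 = (1 + s * z) ^ 2} ∪
    {z | c ^ 2 * (1 - z ^ 2) + (r - c₃ * z) ^ 2 = (1 - s * z) ^ 2}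

theorem finite_boundaryPoints {r s c₃ c : ℝ} (h₀ : ¬(r = 0 ∧ c = 0 ∧ c₃ = 0))
    (h₁ : ¬(c₃ ^ 2 - c ^ 2 = s ^ 2 ∧ r * c₃ = s ∧ c ^ 2 + r ^ 2 = 1)) :
    (boundaryPoints r s c₃ c).Finite := by
  refine ((Set.Finite.subset (finite_setOf_quadratic_eq_zero
    (α := c₃ ^ 2 - c ^ 2) (β := -2 * r * c₃) (γ := c ^ 2 + r ^ 2) ?_) ?_).union
    (Set.Finite.subset (finite_setOf_quadratic_eq_zero
    (α := c₃ ^ 2 - c ^ 2 - s ^ 2) (β := 2 * (r * c₃ - s)) (γ := c ^ 2 + r ^ 2 - 1) ?_) ?_)).union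
    (Set.Finite.subset (finite_setOf_quadratic_eq_zero
    (α := c₃ ^ 2 - c ^ 2 - s ^ 2) (β := 2 * (s - r * c₃)) (γ := c ^ 2 + r ^ 2 - 1) ?_) ?_)
  · rintro ⟨hα, -, hγ⟩
    have hc : c = 0 := by nlinarith
    have hr : r = 0 := by nlinarith
    exact h₀ ⟨hr, hc, by simpa [hc] using hα⟩
  · intro z hz; simp only [mem_ofPred_eq] at hz ⊢; linear_combination hz
  · rintro ⟨hα, hβ, hγ⟩; exact h₁ ⟨by linarith, by linarith, by linarith⟩
  · intro z hz; simp only [mem_ofPred_eq] at hz ⊢; linear_combination hz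
  · rintro ⟨hα, hβ, hγ⟩; exact h₁ ⟨by linarith, by linarith, by linarith⟩
  · intro z hz; simp only [mem_ofPred_eq] at hz ⊢; linear_combination hz

theorem bounds_of_notMem_boundaryPoints {r s c₃ c z : ℝ} (hz : z ∈ Ioo (0 : ℝ) 1)
    (hzE : z ∉ boundaryPoints r s c₃ c) (hHp : Hp r c₃ c z ≤ 1 + s * z)
    (hHm : Hm r c₃ c z ≤ 1 - s * z) (hrc₃ : 0 ≤ r * c₃) :
    0 < Hm r c₃ c z ∧ Hm r c₃ c z ≤ Hp r c₃ c z ∧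
      Hp r c₃ c z < 1 + s * z ∧ Hm r c₃ c z < 1 - s * z := by
  simp only [boundaryPoints, mem_union, mem_ofPred_eq, not_or] at hzE
  obtain ⟨⟨hm0, hpa⟩, hmb⟩ := hzE
  have hc : 0 ≤ c ^ 2 * (1 - z ^ 2) := mul_nonneg (sq_nonneg c) (by nlinarith [hz.1, hz.2])
  have hPm : 0 < c ^ 2 * (1 - z ^ 2) + (r - c₃ * z) ^ 2 :=
    lt_of_le_of_ne (by positivity) (Ne.symm hm0)
  have hP : 0 ≤ c ^ 2 * (1 - z ^ 2) + (r + c₃ * z) ^ 2 := by positivity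
  refine ⟨sqrt_pos.2 hPm, sqrt_le_sqrt (by nlinarith [mul_nonneg hrc₃ hz.1.le]),
    lt_of_le_of_ne hHp fun h => hpa ?_, lt_of_le_of_ne hHm fun h => hmb ?_⟩
  · rw [← h, Hp, sq_sqrt hP]
  · rw [← h, Hm, sq_sqrt hPm.le]

theorem F_le_F_one {r s c₃ c : ℝ} (hs : |s| < 1)
    (hHp : ∀ z ∈ Icc (0 : ℝ) 1, Hp r c₃ c z ≤ 1 + s * z)
    (hHm : ∀ z ∈ Icc (0 : ℝ) 1, Hm r c₃ c z ≤ 1 - s * z)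
    (hs0 : s ≤ 0) (hrc₃ : 0 ≤ r * c₃) (hmix : s * (r * c₃) ≤ c₃ ^ 2 - c ^ 2)
    (hfin : (boundaryPoints r s c₃ c).Finite) {z : ℝ} (hz : z ∈ Icc (0 : ℝ) 1) :
    F r s c₃ c z ≤ F r s c₃ c 1 := by
  have key : ∀ x ∈ Ioo z 1 \ boundaryPoints r s c₃ c,
      ∃ d, HasDerivAt (F r s c₃ c) d x ∧ 0 ≤ d := by
    rintro x ⟨hx, hxE⟩
    have hx₀ : x ∈ Ioo (0 : ℝ) 1 := ⟨hz.1.trans_lt hx.1, hx.2⟩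
    obtain ⟨hk, hkh, hha, hkb⟩ := bounds_of_notMem_boundaryPoints hx₀ hxE
      (hHp x (Ioo_subset_Icc_self hx₀)) (hHm x (Ioo_subset_Icc_self hx₀)) hrc₃
    exact ⟨_, hasDerivAt_F (hk.trans_le hkh) hk hha hkb, div_nonneg
      (deriv_F_numerator_nonneg hs0 hx₀.1.le hrc₃ hmix hk hkh hha hkb) (by positivity)⟩
  refine le_of_deriv_nonneg_off_finite hfin hz.2 ((continuousOn_F hs).mono
    (Icc_subset_Icc_left hz.1)) (fun x hx => ?_) (fun x hx => ?_)
  · obtain ⟨d, hd, -⟩ := key x hx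
    exact hd.differentiableAt
  · obtain ⟨d, hd, hd₀⟩ := key x hx
    rwa [hd.deriv]

theorem F_max_at_one_case_b_general (r s c₃ c : ℝ) (hs : |s| < 1)
    (hHp : ∀ z ∈ Set.Icc (0:ℝ) 1, Hp r c₃ c z ≤ 1 + s*z)
    (hHm : ∀ z ∈ Set.Icc (0:ℝ) 1, Hm r c₃ c z ≤ 1 - s*z)
    (hs0 : s ≤ 0) (hrc₃ : 0 ≤ r * c₃) (hmix : s * (r * c₃) ≤ c₃^2 - c^2) :
    (∀ z ∈ Set.Icc (0:ℝ) 1, F r s c₃ c z ≤ F r s c₃ c 1) ∧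
    F r s c₃ c 1 =
      (1/4) * (1 + s + r + c₃) * Real.logb 2 ((1 + s + r + c₃) / (1 + s)) +
      (1/4) * (1 + s - r - c₃) * Real.logb 2 ((1 + s - r - c₃) / (1 + s)) +
      (1/4) * (1 - s + r - c₃) * Real.logb 2 ((1 - s + r - c₃) / (1 - s)) +
      (1/4) * (1 - s - r + c₃) * Real.logb 2 ((1 - s - r + c₃) / (1 - s)) := by
  refine ⟨fun z hz => ?_, F_one r s c₃ c⟩
  by_cases h₀ : r = 0 ∧ c = 0 ∧ c₃ = 0
  · obtain ⟨rfl, rfl, rfl⟩ := h₀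
    rw [F_zero, F_zero]
  by_cases h₁ : c₃ ^ 2 - c ^ 2 = s ^ 2 ∧ r * c₃ = s ∧ c ^ 2 + r ^ 2 = 1
  · obtain ⟨hq, hp, hn⟩ := h₁
    obtain rfl : s = 0 := le_antisymm hs0 (hp ▸ hrc₃)
    rw [F_eq_one hp (by linear_combination hq) hn, F_eq_one hp (by linear_combination hq) hn]
  exact F_le_F_one hs hHp hHm hs0 hrc₃ hmix (finite_boundaryPoints h₀ h₁) hz

theorem F_max_at_one_case_b (r s c₃ c : ℝ) (hc : 0 ≤ c) (hs : |s| < 1)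
    (hHp : ∀ z ∈ Set.Icc (0:ℝ) 1, Hp r c₃ c z ≤ 1 + s*z)
    (hHm : ∀ z ∈ Set.Icc (0:ℝ) 1, Hm r c₃ c z ≤ 1 - s*z)
    (hs0 : s ≤ 0) (hrc₃ : 0 ≤ r * c₃) (hmix : s * (r * c₃) ≤ c₃^2 - c^2) :
    (∀ z ∈ Set.Icc (0:ℝ) 1, F r s c₃ c z ≤ F r s c₃ c 1) ∧
    F r s c₃ c 1 =
      (1/4) * (1 + s + r + c₃) * Real.logb 2 ((1 + s + r + c₃) / (1 + s)) +
      (1/4) * (1 + s - r - c₃) * Real.logb 2 ((1 + s - r - c₃) / (1 + s)) +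
      (1/4) * (1 - s + r - c₃) * Real.logb 2 ((1 - s + r - c₃) / (1 - s)) +
      (1/4) * (1 - s - r + c₃) * Real.logb 2 ((1 - s - r + c₃) / (1 - s)) :=
  F_max_at_one_case_b_general r s c₃ c hs hHp hHm hs0 hrc₃ hmix
end

section
/- Fix real parameters s, c₃ and c ≥ 0 with |s| < 1 and |c₃| < 1, set r = 0, and assume H₊(z) ≤ 1+sz and H₋(z) ≤ 1−sz for all z ∈ [0,1]. If c₃² ≥ c², then F(z) ≤ F(1) for all z ∈ [0,1], and with C = |c₃| one has F(1) = (1/4)(1+s+C)log₂((1+s+C)/(1+s)) + (1/4)(1+s−C)log₂((1+s−C)/(1+s)) + (1/4)(1−s+C)log₂((1−s+C)/(1−s)) + (1/4)(1−s−C)log₂((1−s−C)/(1−s)). -/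
/-!
With `r = 0` both square roots coincide, `H(z) = √(c²(1 - z²) + c₃²z²) ≤ |c₃|`, and
`4 log 2 · F(z) = Φ(1 + sz, H(z)) + Φ(1 - sz, H(z))` with `Φ(a, h) = L(a + h) + L(a - h) - 2 L(a)`,
`L(x) = x log x`. Convexity of `L` makes `Φ(a, h)` grow with `|h|`, so `H(z)` may be replaced by
`C = |c₃| = H(1)`. Moreover `Φ(·, C)` is convex on `[C, ∞)` (its derivative is `log (1 - C²/a²)`),
so `Φ(1 + u, C) + Φ(1 - u, C)` grows with `|u|`, and `|sz|` is largest at `z = 1`.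
-/

open Real Set

theorem ConvexOn.map_sub_add_map_add_le {D : Set ℝ} {f : ℝ → ℝ} (hf : ConvexOn ℝ D f)
    {m u v : ℝ} (hv₁ : m - v ∈ D) (hv₂ : m + v ∈ D) (huv : |u| ≤ |v|) :
    f (m - u) + f (m + u) ≤ f (m - v) + f (m + v) := by
  rcases eq_or_ne v 0 with rfl | hv
  · simp only [abs_zero, abs_nonpos_iff] at huv
    simp [huv]
  obtain ⟨hθ₀, hθ₁⟩ : -1 ≤ u / v ∧ u / v ≤ 1 :=
    abs_le.1 (by rw [abs_div]; exact div_le_one_of_le₀ huv (abs_nonneg v))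
  -- `m ± u` are the convex combinations of `m ± v` with weights `θ = (1 + u / v) / 2` and `1 - θ`.
  set θ := (1 + u / v) / 2 with hθ_def
  have hplus : θ • (m + v) + (1 - θ) • (m - v) = m + u := by
    simp only [θ, smul_eq_mul]; field_simp; ring
  have hminus : (1 - θ) • (m + v) + θ • (m - v) = m - u := by
    simp only [θ, smul_eq_mul]; field_simp; ring
  have hθ : 0 ≤ θ ∧ 0 ≤ 1 - θ := by constructor <;> linarith
  have hconv₁ := hf.2 hv₂ hv₁ hθ.1 hθ.2 (add_sub_cancel θ 1)
  have hconv₂ := hf.2 hv₂ hv₁ hθ.2 hθ.1 (sub_add_cancel 1 θ)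
  rw [hplus] at hconv₁
  rw [hminus] at hconv₂
  simp only [smul_eq_mul] at hconv₁ hconv₂
  linarith

/-- Twice the Jensen gap of `x ↦ x log x` at the points `a ± h`. -/
noncomputable def jensenGap (a h : ℝ) : ℝ :=
  (a + h) * log (a + h) + (a - h) * log (a - h) - 2 * (a * log a)

lemma mul_log_div_of_ne_zero (x : ℝ) {a : ℝ} (ha : a ≠ 0) :
    x * log (x / a) = x * log x - x * log a := by
  rcases eq_or_ne x 0 with rfl | hx
  · simp
  · rw [log_div hx ha]; ring

lemma mul_log_div_add_mul_log_div (h : ℝ) {a : ℝ} (ha : a ≠ 0) :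
    (a + h) * log ((a + h) / a) + (a - h) * log ((a - h) / a) = jensenGap a h := by
  rw [mul_log_div_of_ne_zero _ ha, mul_log_div_of_ne_zero _ ha, jensenGap]; ring

lemma jensenGap_le_jensenGap {a h h' : ℝ} (hh : |h| ≤ |h'|) (ha : |h'| ≤ a) :
    jensenGap a h ≤ jensenGap a h' := by
  obtain ⟨h₁, h₂⟩ := abs_le.1 ha
  have := convexOn_mul_log.map_sub_add_map_add_le (m := a)
    (mem_Ici.2 (by linarith)) (mem_Ici.2 (by linarith)) hh
  unfold jensenGap
  linarith

lemma hasDerivAt_jensenGap_left {a h : ℝ} (h₁ : a + h ≠ 0) (h₂ : a - h ≠ 0) (h₀ : a ≠ 0) :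
    HasDerivAt (fun x ↦ jensenGap x h) (log (a + h) + log (a - h) - 2 * log a) a := by
  have d₁ := (hasDerivAt_mul_log h₁).comp a ((hasDerivAt_id a).add_const h)
  have d₂ := (hasDerivAt_mul_log h₂).comp a ((hasDerivAt_id a).sub_const h)
  exact ((d₁.add d₂).sub ((hasDerivAt_mul_log h₀).const_mul 2)).congr_deriv (by ring)

lemma convexOn_jensenGap {C : ℝ} (hC : 0 ≤ C) : ConvexOn ℝ (Ici C) (fun a ↦ jensenGap a C) := by
  have hderiv : ∀ a ∈ interior (Ici C),
      HasDerivAt (fun x ↦ jensenGap x C) (log (a + C) + log (a - C) - 2 * log a) a := by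
    intro a ha
    rw [interior_Ici, mem_Ioi] at ha
    exact hasDerivAt_jensenGap_left (by linarith) (by linarith) (by linarith)
  refine MonotoneOn.convexOn_of_deriv (convex_Ici C) ?_
    (fun a ha ↦ (hderiv a ha).differentiableAt.differentiableWithinAt) ?_
  · unfold jensenGap
    fun_prop
  intro a ha b hb hab
  rw [(hderiv a ha).deriv, (hderiv b hb).deriv]
  rw [interior_Ici, mem_Ioi] at ha hb
  have ha₀ : 0 < a := by linarith
  have hb₀ : 0 < b := by linarith
  have haC : 0 < a - C := by linarith
  have hbC : 0 < b - C := by linarith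
  have key : (a + C) * (a - C) * b ^ 2 ≤ (b + C) * (b - C) * a ^ 2 := by
    nlinarith [mul_le_mul_of_nonneg_left (pow_le_pow_left₀ ha₀.le hab 2) (sq_nonneg C)]
  have := log_le_log (by positivity) key
  rw [log_mul (by positivity) (by positivity), log_mul (by linarith) (by linarith),
    log_mul (by positivity) (by positivity), log_mul (by linarith) (by linarith),
    log_pow, log_pow] at this
  push_cast at this
  linarith

lemma jensenGap_add_jensenGap_le {m u v H C : ℝ} (huv : |u| ≤ |v|) (hH : |H| ≤ C)
    (hC : C + |v| ≤ m) :
    jensenGap (m + u) H + jensenGap (m - u) H ≤ jensenGap (m + v) C + jensenGap (m - v) C := by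
  have hC₀ : 0 ≤ C := (abs_nonneg H).trans hH
  have hCC : |H| ≤ |C| := by rwa [abs_of_nonneg hC₀]
  have hCm : ∀ w, |w| ≤ |v| → |C| ≤ m + w ∧ |C| ≤ m - w := fun w hw ↦ by
    rw [abs_of_nonneg hC₀]; constructor <;> linarith [abs_le.1 hw]
  calc jensenGap (m + u) H + jensenGap (m - u) H
      ≤ jensenGap (m + u) C + jensenGap (m - u) C :=
        add_le_add (jensenGap_le_jensenGap hCC (hCm u huv).1)
          (jensenGap_le_jensenGap hCC (hCm u huv).2)
    _ ≤ jensenGap (m + v) C + jensenGap (m - v) C := by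
        have := (convexOn_jensenGap hC₀).map_sub_add_map_add_le (m := m)
          (mem_Ici.2 (by linarith [le_abs_self v])) (mem_Ici.2 (by linarith [neg_abs_le v])) huv
        linarith

lemma F_eq_jensenGap (r s c₃ c z : ℝ) (h₁ : 1 + s * z ≠ 0) (h₂ : 1 - s * z ≠ 0) :
    F r s c₃ c z =
      (jensenGap (1 + s * z) (Hp r c₃ c z) + jensenGap (1 - s * z) (Hm r c₃ c z)) / (4 * log 2) := by
  rw [← mul_log_div_add_mul_log_div _ h₁, ← mul_log_div_add_mul_log_div _ h₂]
  simp only [F, logb]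
  ring

lemma Hm_zero (c₃ c z : ℝ) : Hm 0 c₃ c z = Hp 0 c₃ c z := by
  simp only [Hm, Hp, zero_sub, zero_add, neg_sq]

lemma Hp_zero_one (c₃ c : ℝ) : Hp 0 c₃ c 1 = |c₃| := by
  simp [Hp, sqrt_sq_eq_abs]

lemma abs_Hp_zero_le {c₃ c z : ℝ} (hcc : c ^ 2 ≤ c₃ ^ 2) (hz : z ^ 2 ≤ 1) :
    |Hp 0 c₃ c z| ≤ |c₃| := by
  rw [Hp, abs_of_nonneg (sqrt_nonneg _), ← sqrt_sq_eq_abs]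
  apply sqrt_le_sqrt
  nlinarith [mul_le_mul_of_nonneg_right hcc (sub_nonneg.2 hz)]

theorem F_max_at_one_case_c_general (s c₃ c : ℝ) (hs : |s| < 1)
    (hHp : ∀ z ∈ Set.Icc (0:ℝ) 1, Hp 0 c₃ c z ≤ 1 + s*z)
    (hHm : ∀ z ∈ Set.Icc (0:ℝ) 1, Hm 0 c₃ c z ≤ 1 - s*z)
    (hcc : c^2 ≤ c₃^2) :
    (∀ z ∈ Set.Icc (0:ℝ) 1, F 0 s c₃ c z ≤ F 0 s c₃ c 1) ∧
    F 0 s c₃ c 1 =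
      (1/4) * (1 + s + |c₃|) * Real.logb 2 ((1 + s + |c₃|) / (1 + s)) +
      (1/4) * (1 + s - |c₃|) * Real.logb 2 ((1 + s - |c₃|) / (1 + s)) +
      (1/4) * (1 - s + |c₃|) * Real.logb 2 ((1 - s + |c₃|) / (1 - s)) +
      (1/4) * (1 - s - |c₃|) * Real.logb 2 ((1 - s - |c₃|) / (1 - s)) := by
  have hC : |c₃| + |s| ≤ 1 := by
    have hplus := hHp 1 (right_mem_Icc.2 zero_le_one)
    have hminus := hHm 1 (right_mem_Icc.2 zero_le_one)
    rw [Hm_zero, Hp_zero_one] at hminus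
    rw [Hp_zero_one] at hplus
    rw [← le_sub_iff_add_le', abs_le]
    constructor <;> linarith
  have hne : ∀ w, |w| ≤ |s| → 1 + w ≠ 0 ∧ 1 - w ≠ 0 := fun w hw ↦ by
    obtain ⟨hw₁, hw₂⟩ := abs_lt.1 (hw.trans_lt hs)
    exact ⟨by linarith, by linarith⟩
  refine ⟨fun z hz ↦ ?_, by simp only [F, Hm_zero, Hp_zero_one, mul_one]⟩
  have hsz : |s * z| ≤ |s| := by
    rw [abs_mul, abs_of_nonneg hz.1]
    exact mul_le_of_le_one_right (abs_nonneg s) hz.2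
  have hs₁ : |s * 1| ≤ |s| := by rw [mul_one]
  rw [F_eq_jensenGap _ _ _ _ _ (hne _ hsz).1 (hne _ hsz).2,
    F_eq_jensenGap _ _ _ _ _ (hne _ hs₁).1 (hne _ hs₁).2,
    Hm_zero, Hm_zero, Hp_zero_one, mul_one]
  gcongr ?_ / _
  exact jensenGap_add_jensenGap_le hsz (abs_Hp_zero_le hcc (by nlinarith [hz.1, hz.2])) hC

theorem F_max_at_one_case_c (s c₃ c : ℝ) (hc : 0 ≤ c) (hs : |s| < 1) (hc₃ : |c₃| < 1)
    (hHp : ∀ z ∈ Set.Icc (0:ℝ) 1, Hp 0 c₃ c z ≤ 1 + s*z)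
    (hHm : ∀ z ∈ Set.Icc (0:ℝ) 1, Hm 0 c₃ c z ≤ 1 - s*z)
    (hcc : c^2 ≤ c₃^2) :
    (∀ z ∈ Set.Icc (0:ℝ) 1, F 0 s c₃ c z ≤ F 0 s c₃ c 1) ∧
    F 0 s c₃ c 1 =
      (1/4) * (1 + s + |c₃|) * Real.logb 2 ((1 + s + |c₃|) / (1 + s)) +
      (1/4) * (1 + s - |c₃|) * Real.logb 2 ((1 + s - |c₃|) / (1 + s)) +
      (1/4) * (1 - s + |c₃|) * Real.logb 2 ((1 - s + |c₃|) / (1 - s)) +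
      (1/4) * (1 - s - |c₃|) * Real.logb 2 ((1 - s - |c₃|) / (1 - s)) :=
  F_max_at_one_case_c_general s c₃ c hs hHp hHm hcc
end
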